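/- Let c, d, e be positive integers with e ≤ min{c,d}, let M ∈ ℝ^{c×d}, let ξ̲ be a real number strictly less than all entries of M and ξ̄ a real number strictly greater than all entries of M. Define the (c+d−e)×(c+d−e) matrix 𝓜 = [[M, ξ̄E],[ξ̄E, ξ̲E]] (E denoting all-ones blocks of the appropriate sizes). If 𝓧* is a solution of the linear assignment problem max_{𝓧 ∈ Π_{c+d−e,c+d−e,c+d−e}} trace(𝓜^T 𝓧), then the upper-left c×d submatrix X* of 𝓧* belongs to Π_{c,d,e} and solves max_{X ∈ Π_{c,d,e}} trace(M^T X). -/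

import Mathlib

set_option linter.unusedSectionVars false
set_option linter.unusedVariables false
set_option linter.unnecessarySeqFocus false

open Finset Matrix

/-- Matrices indexed by finite types `α × β`, binary, with at most one `1` per row,
at most one `1` per column, and exactly `e` ones in total. -/
def PiSet (α β : Type*) [Fintype α] [Fintype β] (e : ℕ) : Set (Matrix α β ℝ) :=
  {X | (∀ i j, X i j = 0 ∨ X i j = 1) ∧ (∀ i, ∑ j, X i j ≤ 1) ∧
    (∀ j, ∑ i, X i j ≤ 1) ∧ ∑ i, ∑ j, X i j = (e : ℝ)}

section helpers
variable {α β : Type*} [DecidableEq α] [DecidableEq β]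
variable [Fintype α] [Fintype β] {n : ℕ} {Z : Matrix α β ℝ}

lemma piset_nonneg (h : Z ∈ PiSet α β n) (i : α) (j : β) : 0 ≤ Z i j := by
  rcases h.1 i j with h' | h' <;> rw [h'] <;> norm_num

lemma piset_row_unique (h : Z ∈ PiSet α β n) {i : α} {j j' : β} (h1 : Z i j = 1)
    (hne : j' ≠ j) : Z i j' = 0 := by
  rcases h.1 i j' with h' | h'
  · exact h'
  · exfalso
    have h2 : (2 : ℝ) ≤ ∑ j'', Z i j'' := by
      have : ∑ j'' ∈ ({j, j'} : Finset β), Z i j'' = 2 := by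
        rw [Finset.sum_pair (Ne.symm hne), h1, h']; norm_num
      rw [← this]
      exact Finset.sum_le_sum_of_subset_of_nonneg (Finset.subset_univ _)
        (fun x _ _ => piset_nonneg h i x)
    linarith [h.2.1 i]

lemma piset_col_unique (h : Z ∈ PiSet α β n) {i i' : α} {j : β} (h1 : Z i j = 1)
    (hne : i' ≠ i) : Z i' j = 0 := by
  rcases h.1 i' j with h' | h'
  · exact h'
  · exfalso
    have h2 : (2 : ℝ) ≤ ∑ i'', Z i'' j := by
      have : ∑ i'' ∈ ({i, i'} : Finset α), Z i'' j = 2 := by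
        rw [Finset.sum_pair (Ne.symm hne), h1, h']; norm_num
      rw [← this]
      exact Finset.sum_le_sum_of_subset_of_nonneg (Finset.subset_univ _)
        (fun x _ _ => piset_nonneg h x j)
    linarith [h.2.2.1 j]

lemma piset_rowsum_nonneg (h : Z ∈ PiSet α β n) (i : α) : 0 ≤ ∑ j, Z i j :=
  Finset.sum_nonneg fun j _ => piset_nonneg h i j

lemma piset_colsum_nonneg (h : Z ∈ PiSet α β n) (j : β) : 0 ≤ ∑ i, Z i j :=
  Finset.sum_nonneg fun i _ => piset_nonneg h i j

/-- In a square full PiSet (permutation matrix), each row sums to 1. -/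
lemma piset_rowsum_eq_one (h : Z ∈ PiSet α β n) (hcard : Fintype.card α = n)
    (i : α) : ∑ j, Z i j = 1 := by
  by_contra hne
  have hlt : ∑ j, Z i j < 1 := lt_of_le_of_ne (h.2.1 i) hne
  have : ∑ i', ∑ j, Z i' j < ∑ i' : α, (1 : ℝ) :=
    Finset.sum_lt_sum (fun i' _ => h.2.1 i') ⟨i, Finset.mem_univ i, hlt⟩
  rw [h.2.2.2, Finset.sum_const, Finset.card_univ, hcard, nsmul_eq_mul, mul_one] at this
  exact lt_irrefl _ this

lemma piset_colsum_eq_one (h : Z ∈ PiSet α β n) (hcard : Fintype.card β = n)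
    (j : β) : ∑ i, Z i j = 1 := by
  by_contra hne
  have hlt : ∑ i, Z i j < 1 := lt_of_le_of_ne (h.2.2.1 j) hne
  have hswap : ∑ i, ∑ j', Z i j' = ∑ j', ∑ i, Z i j' := Finset.sum_comm
  have : ∑ j', ∑ i, Z i j' < ∑ j' : β, (1 : ℝ) :=
    Finset.sum_lt_sum (fun j' _ => h.2.2.1 j') ⟨j, Finset.mem_univ j, hlt⟩
  rw [← hswap, h.2.2.2, Finset.sum_const, Finset.card_univ, hcard, nsmul_eq_mul, mul_one] at this
  exact lt_irrefl _ this

/-- Each row sum is 0 or 1. -/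
lemma piset_rowsum_zero_or_one (h : Z ∈ PiSet α β n) (i : α) :
    ∑ j, Z i j = 0 ∨ ∑ j, Z i j = 1 := by
  by_cases hex : ∃ j, Z i j = 1
  · obtain ⟨j, hj⟩ := hex
    right
    have h1 : (1 : ℝ) ≤ ∑ j', Z i j' := by
      calc (1:ℝ) = Z i j := hj.symm
      _ ≤ ∑ j', Z i j' := Finset.single_le_sum (fun x _ => piset_nonneg h i x) (Finset.mem_univ j)
    linarith [h.2.1 i]
  · left
    push_neg at hex
    apply Finset.sum_eq_zero
    intro j _
    rcases h.1 i j with h' | h'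
    · exact h'
    · exact absurd h' (hex j)

lemma piset_colsum_zero_or_one (h : Z ∈ PiSet α β n) (j : β) :
    ∑ i, Z i j = 0 ∨ ∑ i, Z i j = 1 := by
  by_cases hex : ∃ i, Z i j = 1
  · obtain ⟨i, hi⟩ := hex
    right
    have h1 : (1 : ℝ) ≤ ∑ i', Z i' j := by
      calc (1:ℝ) = Z i j := hi.symm
      _ ≤ ∑ i', Z i' j := Finset.single_le_sum (fun x _ => piset_nonneg h x j) (Finset.mem_univ i)
    linarith [h.2.2.1 j]
  · left
    push_neg at hex
    apply Finset.sum_eq_zero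
    intro i _
    rcases h.1 i j with h' | h'
    · exact h'
    · exact absurd h' (hex i)

end helpers


section helpers
variable {α β : Type*} [DecidableEq α] [DecidableEq β]
variable [Fintype α] [Fintype β] {n : ℕ} {Z : Matrix α β ℝ}

lemma card_filter_eq_one_of_dich (hsum : ∑ i, ∑ j, Z i j = (n : ℝ))
    (hdich : ∀ i, ∑ j, Z i j = 0 ∨ ∑ j, Z i j = 1) :
    (Finset.univ.filter (fun i => ∑ j, Z i j = 1)).card = n := by
  have h := Finset.sum_filter_add_sum_filter_not Finset.univ
    (fun i => ∑ j, Z i j = 1) (fun i => ∑ j, Z i j)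
  have h1 : ∑ i ∈ Finset.univ.filter (fun i => ∑ j, Z i j = 1), ∑ j, Z i j
      = ((Finset.univ.filter (fun i => ∑ j, Z i j = 1)).card : ℝ) := by
    rw [Finset.sum_congr rfl (fun i hi => (Finset.mem_filter.mp hi).2)]
    simp
  have h2 : ∑ i ∈ Finset.univ.filter (fun i => ¬ (∑ j, Z i j = 1)), ∑ j, Z i j = 0 := by
    apply Finset.sum_eq_zero
    intro i hi
    rcases hdich i with h' | h'
    · exact h'
    · exact absurd h' (Finset.mem_filter.mp hi).2
  rw [h1, h2, add_zero, hsum] at h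
  exact_mod_cast h

lemma card_filter_eq_zero_of_dich (hsum : ∑ i, ∑ j, Z i j = (n : ℝ))
    (hdich : ∀ i, ∑ j, Z i j = 0 ∨ ∑ j, Z i j = 1) :
    (Finset.univ.filter (fun i => ∑ j, Z i j = 0)).card = Fintype.card α - n := by
  have key := card_filter_eq_one_of_dich hsum hdich
  have hfc : Finset.univ.filter (fun i => ∑ j, Z i j = 0)
      = Finset.univ.filter (fun i => ¬ (∑ j, Z i j = 1)) := by
    apply Finset.filter_congr
    intro i _
    rcases hdich i with h' | h' <;> simp [h']
  have h3 := Finset.card_filter_add_card_filter_not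
    (s := Finset.univ (α := α)) (p := fun i => ∑ j, Z i j = 1)
  rw [Finset.card_univ] at h3
  rw [hfc]
  omega
end helpers


lemma sum_sum_sum_type {γ δ ε ζ : Type*} [Fintype γ] [Fintype δ] [Fintype ε] [Fintype ζ]
    (f : γ ⊕ δ → ε ⊕ ζ → ℝ) :
    ∑ a, ∑ b, f a b = ((∑ i, ∑ j, f (Sum.inl i) (Sum.inl j))
      + ∑ i, ∑ r, f (Sum.inl i) (Sum.inr r))
      + ((∑ s, ∑ j, f (Sum.inr s) (Sum.inl j)) + ∑ s, ∑ r, f (Sum.inr s) (Sum.inr r)) := by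
  rw [Fintype.sum_sum_type]
  simp only [Fintype.sum_sum_type, Finset.sum_add_distrib]

lemma exists_extension (c d e : ℕ) (hec : e ≤ c) (hed : e ≤ d)
    (Y : Matrix (Fin c) (Fin d) ℝ) (hY : Y ∈ PiSet (Fin c) (Fin d) e) :
    ∃ Z ∈ PiSet (Fin c ⊕ Fin (d - e)) (Fin d ⊕ Fin (c - e)) (c + d - e),
      (∀ i j, Z (Sum.inl i) (Sum.inl j) = Y i j) ∧
      (∑ i, ∑ r, Z (Sum.inl i) (Sum.inr r)) = (c : ℝ) - e ∧
      (∑ s, ∑ j, Z (Sum.inr s) (Sum.inl j)) = (d : ℝ) - e ∧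
      (∀ s r, Z (Sum.inr s) (Sum.inr r) = 0) := by
  classical
  set R : Finset (Fin c) := Finset.univ.filter (fun i => ∑ j, Y i j = 0) with hRdef
  set C : Finset (Fin d) := Finset.univ.filter (fun j => ∑ i, Y i j = 0) with hCdef
  have hRcard : R.card = c - e := by
    have := card_filter_eq_zero_of_dich hY.2.2.2 (piset_rowsum_zero_or_one hY)
    simpa using this
  have hCcard : C.card = d - e := by
    have hsum' : ∑ j, ∑ i, Y.transpose j i = (e : ℝ) := by
      simp only [Matrix.transpose_apply]; exact Finset.sum_comm.trans hY.2.2.2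
    have hdich' : ∀ j, ∑ i, Y.transpose j i = 0 ∨ ∑ i, Y.transpose j i = 1 := by
      intro j; simpa [Matrix.transpose_apply] using piset_colsum_zero_or_one hY j
    have := card_filter_eq_zero_of_dich (Z := Y.transpose) hsum' hdich'
    rw [hCdef]
    convert this <;> simp [Matrix.transpose_apply]
  let φ : {x // x ∈ R} ≃ Fin (c - e) := R.equivFinOfCardEq hRcard
  let ψ : {x // x ∈ C} ≃ Fin (d - e) := C.equivFinOfCardEq hCcard
  set A : Fin c → Fin (c - e) → ℝ :=
    fun i r => if i = ((φ.symm r : {x // x ∈ R}) : Fin c) then 1 else 0 with hAdef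
  set B : Fin (d - e) → Fin d → ℝ :=
    fun s j => if j = ((ψ.symm s : {x // x ∈ C}) : Fin d) then 1 else 0 with hBdef
  have rowA : ∀ i, ∑ r, A i r = if i ∈ R then 1 else 0 := by
    intro i
    have h1 : ∑ r, A i r = ∑ x : {x // x ∈ R}, (if i = (x : Fin c) then (1:ℝ) else 0) :=
      Equiv.sum_comp φ.symm (fun x => if i = (x : Fin c) then (1:ℝ) else 0)
    rw [h1, Finset.sum_coe_sort R (fun x => if i = x then (1:ℝ) else 0),
      Finset.sum_ite_eq R i (fun _ => (1:ℝ))]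
  have colA : ∀ r, ∑ i, A i r = 1 := by
    intro r; simp [hAdef]
  have rowB : ∀ s, ∑ j, B s j = 1 := by
    intro s; simp [hBdef]
  have colB : ∀ j, ∑ s, B s j = if j ∈ C then 1 else 0 := by
    intro j
    have h1 : ∑ s, B s j = ∑ x : {x // x ∈ C}, (if j = (x : Fin d) then (1:ℝ) else 0) :=
      Equiv.sum_comp ψ.symm (fun x => if j = (x : Fin d) then (1:ℝ) else 0)
    rw [h1, Finset.sum_coe_sort C (fun x => if j = x then (1:ℝ) else 0),
      Finset.sum_ite_eq C j (fun _ => (1:ℝ))]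
  have castCD : ((c + d - e : ℕ) : ℝ) = (e : ℝ) + ((c - e : ℕ) : ℝ) + ((d - e : ℕ) : ℝ) := by
    rw [Nat.cast_sub (by omega), Nat.cast_sub hec, Nat.cast_sub hed]
    push_cast; ring
  have hRmem : ∀ i : Fin c, i ∈ R ↔ ∑ j, Y i j = 0 := by
    intro i; rw [hRdef]; simp
  have hCmem : ∀ j : Fin d, j ∈ C ↔ ∑ i, Y i j = 0 := by
    intro j; rw [hCdef]; simp
  refine ⟨Matrix.fromBlocks Y (Matrix.of A) (Matrix.of B) 0, ⟨?_, ?_, ?_, ?_⟩, ?_, ?_, ?_, ?_⟩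
  · rintro (i | s) (j | r)
    · simpa using hY.1 i j
    · simp only [Matrix.fromBlocks_apply₁₂, Matrix.of_apply, hAdef]
      split <;> simp
    · simp only [Matrix.fromBlocks_apply₂₁, Matrix.of_apply, hBdef]
      split <;> simp
    · simp
  · rintro (i | s)
    · rw [Fintype.sum_sum_type]
      simp only [Matrix.fromBlocks_apply₁₁, Matrix.fromBlocks_apply₁₂, Matrix.of_apply]
      rw [rowA i]
      by_cases hi : i ∈ R
      · rw [(hRmem i).mp hi, if_pos hi]; norm_num
      · rw [if_neg hi]
        have := hY.2.1 i
        simpa using this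
    · rw [Fintype.sum_sum_type]
      simp only [Matrix.fromBlocks_apply₂₁, Matrix.fromBlocks_apply₂₂, Matrix.of_apply]
      rw [rowB s]
      simp
  · rintro (j | r)
    · rw [Fintype.sum_sum_type]
      simp only [Matrix.fromBlocks_apply₁₁, Matrix.fromBlocks_apply₂₁, Matrix.of_apply]
      rw [colB j]
      by_cases hj : j ∈ C
      · rw [(hCmem j).mp hj, if_pos hj]; norm_num
      · rw [if_neg hj]
        have := hY.2.2.1 j
        simpa using this
    · rw [Fintype.sum_sum_type]
      simp only [Matrix.fromBlocks_apply₁₂, Matrix.fromBlocks_apply₂₂, Matrix.of_apply]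
      rw [colA r]
      simp
  · rw [sum_sum_sum_type (f := fun a b => Matrix.fromBlocks Y (Matrix.of A) (Matrix.of B) 0 a b)]
    simp only [Matrix.fromBlocks_apply₁₁, Matrix.fromBlocks_apply₁₂,
      Matrix.fromBlocks_apply₂₁, Matrix.fromBlocks_apply₂₂, Matrix.of_apply]
    have hA : ∑ i, ∑ r, A i r = ((c - e : ℕ) : ℝ) := by
      rw [Finset.sum_congr rfl (fun i _ => rowA i)]
      rw [Finset.sum_ite_mem, Finset.univ_inter, Finset.sum_const, hRcard]
      simp
    have hB : ∑ s, ∑ j, B s j = ((d - e : ℕ) : ℝ) := by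
      rw [Finset.sum_congr rfl (fun s _ => rowB s)]
      simp
    rw [hA, hB, hY.2.2.2, castCD]
    simp
  · intro i j; simp
  · have hA : ∑ i, ∑ r, A i r = ((c - e : ℕ) : ℝ) := by
      rw [Finset.sum_congr rfl (fun i _ => rowA i)]
      rw [Finset.sum_ite_mem, Finset.univ_inter, Finset.sum_const, hRcard]
      simp
    simpa [Nat.cast_sub hec] using hA
  · have hB : ∑ s, ∑ j, B s j = ((d - e : ℕ) : ℝ) := by
      rw [Finset.sum_congr rfl (fun s _ => rowB s)]
      simp
    simpa [Nat.cast_sub hed] using hB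
  · intro s r; simp


theorem glap_via_lap (c d e : ℕ) (hc : 0 < c) (hd : 0 < d) (he : 0 < e)
    (hecd : e ≤ min c d) (M : Matrix (Fin c) (Fin d) ℝ)
    (ξlo ξhi : ℝ) (hlo : ∀ i j, ξlo < M i j) (hhi : ∀ i j, M i j < ξhi)
    (𝓜 : Matrix (Fin c ⊕ Fin (d - e)) (Fin d ⊕ Fin (c - e)) ℝ)
    (h𝓜 : 𝓜 = Matrix.fromBlocks M (Matrix.of fun _ _ => ξhi) (Matrix.of fun _ _ => ξhi)
      (Matrix.of fun _ _ => ξlo))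
    (𝓧 : Matrix (Fin c ⊕ Fin (d - e)) (Fin d ⊕ Fin (c - e)) ℝ)
    (h𝓧 : IsGreatest
      (Set.image (fun Z => ∑ i, ∑ j, 𝓜 i j * Z i j)
        (PiSet (Fin c ⊕ Fin (d - e)) (Fin d ⊕ Fin (c - e)) (c + d - e)))
      (∑ i, ∑ j, 𝓜 i j * 𝓧 i j))
    (h𝓧mem : 𝓧 ∈ PiSet (Fin c ⊕ Fin (d - e)) (Fin d ⊕ Fin (c - e)) (c + d - e))
    (X : Matrix (Fin c) (Fin d) ℝ) (hX : X = fun i j => 𝓧 (Sum.inl i) (Sum.inl j)) :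
    X ∈ PiSet (Fin c) (Fin d) e ∧
      IsGreatest (Set.image (fun Z => ∑ i, ∑ j, M i j * Z i j) (PiSet (Fin c) (Fin d) e))
        (∑ i, ∑ j, M i j * X i j) := by
  classical
  subst h𝓜
  have hec : e ≤ c := le_trans hecd (min_le_left c d)
  have hed : e ≤ d := le_trans hecd (min_le_right c d)
  have hcast_ce : ((c - e : ℕ) : ℝ) = (c : ℝ) - e := by
    rw [Nat.cast_sub hec]
  have hcast_de : ((d - e : ℕ) : ℝ) = (d : ℝ) - e := by
    rw [Nat.cast_sub hed]
  have hcardrow : Fintype.card (Fin c ⊕ Fin (d - e)) = c + d - e := by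
    simp only [Fintype.card_sum, Fintype.card_fin]; omega
  have hcardcol : Fintype.card (Fin d ⊕ Fin (c - e)) = c + d - e := by
    simp only [Fintype.card_sum, Fintype.card_fin]; omega
  have rows1 : ∀ a, ∑ b, 𝓧 a b = 1 := piset_rowsum_eq_one h𝓧mem hcardrow
  have cols1 : ∀ b, ∑ a, 𝓧 a b = 1 := piset_colsum_eq_one h𝓧mem hcardcol
  set k := ∑ i : Fin c, ∑ j : Fin d, 𝓧 (Sum.inl i) (Sum.inl j) with hkdef
  set TR := ∑ i : Fin c, ∑ r : Fin (c - e), 𝓧 (Sum.inl i) (Sum.inr r) with hTRdef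
  set BL := ∑ s : Fin (d - e), ∑ j : Fin d, 𝓧 (Sum.inr s) (Sum.inl j) with hBLdef
  set BR := ∑ s : Fin (d - e), ∑ r : Fin (c - e), 𝓧 (Sum.inr s) (Sum.inr r) with hBRdef
  -- row equations
  have h1 : k + TR = c := by
    have h := Finset.sum_congr rfl (fun (i : Fin c) (_ : i ∈ Finset.univ) => rows1 (Sum.inl i))
    simp only [Fintype.sum_sum_type, Finset.sum_add_distrib, Finset.sum_const,
      Finset.card_univ, Fintype.card_fin, nsmul_eq_mul, mul_one] at h
    exact h
  have h2 : BL + BR = (d : ℝ) - e := by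
    have h := Finset.sum_congr rfl
      (fun (s : Fin (d - e)) (_ : s ∈ Finset.univ) => rows1 (Sum.inr s))
    simp only [Fintype.sum_sum_type, Finset.sum_add_distrib, Finset.sum_const,
      Finset.card_univ, Fintype.card_fin, nsmul_eq_mul, mul_one] at h
    rw [← hcast_de]
    exact h
  have h4 : TR + BR = (c : ℝ) - e := by
    have h := Finset.sum_congr rfl
      (fun (r : Fin (c - e)) (_ : r ∈ Finset.univ) => cols1 (Sum.inr r))
    simp only [Fintype.sum_sum_type, Finset.sum_add_distrib, Finset.sum_const,
      Finset.card_univ, Fintype.card_fin, nsmul_eq_mul, mul_one] at h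
    rw [← hcast_ce]
    rw [hTRdef, hBRdef, Finset.sum_comm, Finset.sum_comm (γ := Fin (d - e))]
    exact h
  have h3 : k + BL = d := by
    have h := Finset.sum_congr rfl
      (fun (j : Fin d) (_ : j ∈ Finset.univ) => cols1 (Sum.inl j))
    simp only [Fintype.sum_sum_type, Finset.sum_add_distrib, Finset.sum_const,
      Finset.card_univ, Fintype.card_fin, nsmul_eq_mul, mul_one] at h
    rw [hkdef, hBLdef, Finset.sum_comm, Finset.sum_comm (γ := Fin (d - e))]
    exact h
  have hBRnn : 0 ≤ BR :=
    Finset.sum_nonneg fun s _ => Finset.sum_nonneg fun r _ => piset_nonneg h𝓧mem _ _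
  have hBReq : BR = k - e := by linarith
  -- the swap argument : k = e
  have hke : k = e := by
    by_contra hne
    have hBRpos : 0 < BR := by
      rcases lt_or_gt_of_ne hne with h' | h'
      · linarith
      · linarith
    -- a one in the bottom-right block
    have hone_br : ∃ s r, 𝓧 (Sum.inr s) (Sum.inr r) = 1 := by
      by_contra hno
      push_neg at hno
      have : BR = 0 := by
        rw [hBRdef]
        apply Finset.sum_eq_zero
        intro s _
        apply Finset.sum_eq_zero
        intro r _
        rcases h𝓧mem.1 (Sum.inr s) (Sum.inr r) with h' | h'
        · exact h'
        · exact absurd h' (hno s r)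
      linarith
    have hone_tl : ∃ i0 j0, 𝓧 (Sum.inl i0) (Sum.inl j0) = 1 := by
      by_contra hno
      push_neg at hno
      have : k = 0 := by
        rw [hkdef]
        apply Finset.sum_eq_zero
        intro i _
        apply Finset.sum_eq_zero
        intro j _
        rcases h𝓧mem.1 (Sum.inl i) (Sum.inl j) with h' | h'
        · exact h'
        · exact absurd h' (hno i j)
      have : (e : ℝ) ≤ 0 := by linarith
      have : (0:ℝ) < e := by exact_mod_cast he
      linarith
    obtain ⟨s, r, hsr⟩ := hone_br
    obtain ⟨i0, j0, hij⟩ := hone_tl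
    set σ : (Fin d ⊕ Fin (c - e)) ≃ (Fin d ⊕ Fin (c - e)) :=
      Equiv.swap (Sum.inl j0) (Sum.inr r) with hσdef
    set Z' : Matrix (Fin c ⊕ Fin (d - e)) (Fin d ⊕ Fin (c - e)) ℝ :=
      Matrix.of (fun a b => 𝓧 a (σ b)) with hZ'def
    have hZ'mem : Z' ∈ PiSet (Fin c ⊕ Fin (d - e)) (Fin d ⊕ Fin (c - e)) (c + d - e) := by
      refine ⟨fun a b => h𝓧mem.1 a (σ b), fun a => ?_, fun b => ?_, ?_⟩
      · rw [hZ'def]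
        show ∑ b, 𝓧 a (σ b) ≤ 1
        rw [Equiv.sum_comp σ (𝓧 a)]
        exact h𝓧mem.2.1 a
      · exact h𝓧mem.2.2.1 (σ b)
      · show ∑ a, ∑ b, 𝓧 a (σ b) = _
        rw [Finset.sum_congr rfl (fun a _ => Equiv.sum_comp σ (𝓧 a))]
        exact h𝓧mem.2.2.2
    have hle : (∑ a, ∑ b, (Matrix.fromBlocks M (Matrix.of fun _ _ => ξhi)
          (Matrix.of fun _ _ => ξhi) (Matrix.of fun _ _ => ξlo)) a b * Z' a b)
        ≤ ∑ a, ∑ b, (Matrix.fromBlocks M (Matrix.of fun _ _ => ξhi)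
          (Matrix.of fun _ _ => ξhi) (Matrix.of fun _ _ => ξlo)) a b * 𝓧 a b :=
      h𝓧.2 ⟨Z', hZ'mem, rfl⟩
    set 𝓝 := Matrix.fromBlocks M (Matrix.of fun _ _ => ξhi)
      (Matrix.of fun _ _ => ξhi) (Matrix.of fun _ _ => ξlo) with h𝓝def
    set g : (Fin c ⊕ Fin (d - e)) → ℝ := fun a =>
      𝓝 a (Sum.inl j0) * (𝓧 a (Sum.inr r) - 𝓧 a (Sum.inl j0))
      + 𝓝 a (Sum.inr r) * (𝓧 a (Sum.inl j0) - 𝓧 a (Sum.inr r)) with hgdef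
    have step1 : ∀ a, ∑ b, 𝓝 a b * (𝓧 a (σ b) - 𝓧 a b) = g a := by
      intro a
      have hz : ∀ b ∈ Finset.univ, b ∉ ({Sum.inl j0, Sum.inr r} :
          Finset (Fin d ⊕ Fin (c - e))) → 𝓝 a b * (𝓧 a (σ b) - 𝓧 a b) = 0 := by
        intro b _ hb
        simp only [Finset.mem_insert, Finset.mem_singleton, not_or] at hb
        rw [hσdef, Equiv.swap_apply_of_ne_of_ne hb.1 hb.2]
        simp
      rw [← Finset.sum_subset (Finset.subset_univ _) hz,
        Finset.sum_pair (by simp : (Sum.inl j0 : Fin d ⊕ Fin (c - e)) ≠ Sum.inr r)]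
      rw [hσdef]
      rw [Equiv.swap_apply_left, Equiv.swap_apply_right]
    have step2 : ∑ a, g a = g (Sum.inl i0) + g (Sum.inr s) := by
      have hz : ∀ a ∈ Finset.univ, a ∉ ({Sum.inl i0, Sum.inr s} :
          Finset (Fin c ⊕ Fin (d - e))) → g a = 0 := by
        intro a _ ha
        simp only [Finset.mem_insert, Finset.mem_singleton, not_or] at ha
        have e1 : 𝓧 a (Sum.inl j0) = 0 := piset_col_unique h𝓧mem hij ha.1
        have e2 : 𝓧 a (Sum.inr r) = 0 := piset_col_unique h𝓧mem hsr ha.2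
        rw [hgdef]
        simp [e1, e2]
      rw [← Finset.sum_subset (Finset.subset_univ _) hz,
        Finset.sum_pair (by simp : (Sum.inl i0 : Fin c ⊕ Fin (d - e)) ≠ Sum.inr s)]
    have hx1 : 𝓧 (Sum.inl i0) (Sum.inr r) = 0 :=
      piset_row_unique h𝓧mem hij (by simp)
    have hx2 : 𝓧 (Sum.inr s) (Sum.inl j0) = 0 :=
      piset_row_unique h𝓧mem hsr (by simp)
    have hg1 : g (Sum.inl i0) = ξhi - M i0 j0 := by
      rw [hgdef]
      simp only [h𝓝def, Matrix.fromBlocks_apply₁₁, Matrix.fromBlocks_apply₁₂,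
        Matrix.of_apply, hx1, hij]
      ring
    have hg2 : g (Sum.inr s) = ξhi - ξlo := by
      rw [hgdef]
      simp only [h𝓝def, Matrix.fromBlocks_apply₂₁, Matrix.fromBlocks_apply₂₂,
        Matrix.of_apply, hx2, hsr]
      ring
    have hdiff : (∑ a, ∑ b, 𝓝 a b * Z' a b) - (∑ a, ∑ b, 𝓝 a b * 𝓧 a b)
        = (ξhi - M i0 j0) + (ξhi - ξlo) := by
      rw [← Finset.sum_sub_distrib]
      have : ∀ a, (∑ b, 𝓝 a b * Z' a b) - (∑ b, 𝓝 a b * 𝓧 a b)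
          = ∑ b, 𝓝 a b * (𝓧 a (σ b) - 𝓧 a b) := by
        intro a
        rw [← Finset.sum_sub_distrib]
        apply Finset.sum_congr rfl
        intro b _
        rw [hZ'def]
        show 𝓝 a b * 𝓧 a (σ b) - 𝓝 a b * 𝓧 a b = _
        ring
      rw [Finset.sum_congr rfl (fun a _ => this a),
        Finset.sum_congr rfl (fun a _ => step1 a), step2, hg1, hg2]
    have hpos : (0:ℝ) < (ξhi - M i0 j0) + (ξhi - ξlo) := by
      have := hhi i0 j0
      have := hlo i0 j0
      linarith
    linarith
  -- consequences of k = e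
  have hTR_eq : TR = (c : ℝ) - e := by linarith
  have hBL_eq : BL = (d : ℝ) - e := by linarith
  have hBR_eq : BR = 0 := by linarith
  have hXmem : X ∈ PiSet (Fin c) (Fin d) e := by
    rw [hX]
    refine ⟨fun i j => h𝓧mem.1 _ _, fun i => ?_, fun j => ?_, ?_⟩
    · have h := rows1 (Sum.inl i)
      rw [Fintype.sum_sum_type] at h
      have hnn : 0 ≤ ∑ r : Fin (c - e), 𝓧 (Sum.inl i) (Sum.inr r) :=
        Finset.sum_nonneg fun r _ => piset_nonneg h𝓧mem _ _
      show ∑ j, 𝓧 (Sum.inl i) (Sum.inl j) ≤ 1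
      linarith
    · have h := cols1 (Sum.inl j)
      rw [Fintype.sum_sum_type] at h
      have hnn : 0 ≤ ∑ s : Fin (d - e), 𝓧 (Sum.inr s) (Sum.inl j) :=
        Finset.sum_nonneg fun s _ => piset_nonneg h𝓧mem _ _
      show ∑ i, 𝓧 (Sum.inl i) (Sum.inl j) ≤ 1
      linarith
    · show ∑ i, ∑ j, 𝓧 (Sum.inl i) (Sum.inl j) = (e : ℝ)
      rw [← hkdef]
      exact hke
  -- objective value of 𝓧
  have hobjX : (∑ a, ∑ b, (Matrix.fromBlocks M (Matrix.of fun _ _ => ξhi)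
        (Matrix.of fun _ _ => ξhi) (Matrix.of fun _ _ => ξlo)) a b * 𝓧 a b)
      = ((∑ i, ∑ j, M i j * 𝓧 (Sum.inl i) (Sum.inl j)) + ξhi * TR)
        + (ξhi * BL + ξlo * BR) := by
    rw [sum_sum_sum_type (f := fun a b => (Matrix.fromBlocks M (Matrix.of fun _ _ => ξhi)
        (Matrix.of fun _ _ => ξhi) (Matrix.of fun _ _ => ξlo)) a b * 𝓧 a b)]
    simp only [Matrix.fromBlocks_apply₁₁, Matrix.fromBlocks_apply₁₂,
      Matrix.fromBlocks_apply₂₁, Matrix.fromBlocks_apply₂₂, Matrix.of_apply]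
    rw [hTRdef, hBLdef, hBRdef]
    simp only [Finset.mul_sum]
  refine ⟨hXmem, ⟨X, hXmem, rfl⟩, ?_⟩
  rintro v ⟨Y, hYmem, rfl⟩
  obtain ⟨Z, hZmem, hZTL, hZTR, hZBL, hZBR⟩ := exists_extension c d e hec hed Y hYmem
  have hleZ := h𝓧.2 ⟨Z, hZmem, rfl⟩
  have hobjZ : (∑ a, ∑ b, (Matrix.fromBlocks M (Matrix.of fun _ _ => ξhi)
        (Matrix.of fun _ _ => ξhi) (Matrix.of fun _ _ => ξlo)) a b * Z a b)
      = ((∑ i, ∑ j, M i j * Y i j) + ξhi * ((c : ℝ) - e))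
        + (ξhi * ((d : ℝ) - e) + 0) := by
    rw [sum_sum_sum_type (f := fun a b => (Matrix.fromBlocks M (Matrix.of fun _ _ => ξhi)
        (Matrix.of fun _ _ => ξhi) (Matrix.of fun _ _ => ξlo)) a b * Z a b)]
    simp only [Matrix.fromBlocks_apply₁₁, Matrix.fromBlocks_apply₁₂,
      Matrix.fromBlocks_apply₂₁, Matrix.fromBlocks_apply₂₂, Matrix.of_apply]
    congr 1
    · congr 1
      · exact Finset.sum_congr rfl fun i _ => Finset.sum_congr rfl fun j _ => by rw [hZTL]
      · rw [← hZTR, Finset.mul_sum]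
        exact Finset.sum_congr rfl fun i _ => by rw [Finset.mul_sum]
    · congr 1
      · rw [← hZBL, Finset.mul_sum]
        exact Finset.sum_congr rfl fun s _ => by rw [Finset.mul_sum]
      · apply Finset.sum_eq_zero
        intro s _
        apply Finset.sum_eq_zero
        intro r _
        rw [hZBR]
        simp
  have hXsum : ∑ i, ∑ j, M i j * X i j = ∑ i, ∑ j, M i j * 𝓧 (Sum.inl i) (Sum.inl j) := by
    simp only [hX]
  show ∑ i, ∑ j, M i j * Y i j ≤ ∑ i, ∑ j, M i j * X i j
  rw [hXsum]
  have hleZ' : (∑ a, ∑ b, (Matrix.fromBlocks M (Matrix.of fun _ _ => ξhi)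
        (Matrix.of fun _ _ => ξhi) (Matrix.of fun _ _ => ξlo)) a b * Z a b)
      ≤ ∑ a, ∑ b, (Matrix.fromBlocks M (Matrix.of fun _ _ => ξhi)
        (Matrix.of fun _ _ => ξhi) (Matrix.of fun _ _ => ξlo)) a b * 𝓧 a b := hleZ
  rw [hobjZ, hobjX] at hleZ'
  rw [hTR_eq, hBL_eq, hBR_eq] at hleZ'
  linarith
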